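/- In the graphs G_n(f) built from the unit square (Vicsek-type level when f(n)=0, Sierpiński-carpet-type level when f(n)=1), the effective resistance between corner points satisfies R_{(G_n(f),E_n(f))}(p₁,p₃) ≤ 4·R_{(G_n(f),E_n(f))}({p₁,p₇},{p₃,p₅}) for all n ≥ 0 and all f:ℕ→{0,1}. -/

import Mathlib

/-!
Both reflections `z ↦ z̄` and `σ : z ↦ -z̄` of the square preserve the graph, so composing a
potential with them does not increase its energy. Hence antisymmetrizing a potential across the
vertical axis (`g ↦ (g + 1 - g ∘ σ) / 2`) does not increase its energy either, and makes it equal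
to `1/2` on the axis. Since the real parts of the vertices lie in `3⁻ⁿ/2 · ℤ` while edges have
length `3⁻ⁿ/√2`, no edge crosses the axis, so folding the potential to `≥ 1/2` on the left and
`≤ 1/2` on the right does not increase the energy. The result `h` has `h(p₅) ≤ 1/2 ≤ h(p₇)`, and
`h + h ∘ conj - h(p₅)` clipped to `[0,1]` is a potential for `({p₁,p₇},{p₃,p₅})` whose energy
is at most `2 (E h + E (h ∘ conj)) ≤ 4 E h`.
-/

open scoped ENNReal

/-- The nine reference points `p₀, …, p₈` of the square `[-1/2,1/2]²` in `ℂ`. -/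
noncomputable def pt : ℕ → ℂ
  | 1 => -(1 / 2) - Complex.I / 2
  | 2 => -(Complex.I / 2)
  | 3 => 1 / 2 - Complex.I / 2
  | 4 => 1 / 2
  | 5 => 1 / 2 + Complex.I / 2
  | 6 => Complex.I / 2
  | 7 => -(1 / 2) + Complex.I / 2
  | 8 => -(1 / 2)
  | _ => 0

/-- The contraction `φ_j(z) = (z - p_j)/3 + p_j`. -/
noncomputable def phi (j : ℕ) (z : ℂ) : ℂ := (z - pt j) / 3 + pt j

/-- The vertex sets `G_n(f)`: a Vicsek-type level when `f n = 0` and a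
Sierpiński-carpet-type level when `f n = 1`. -/
noncomputable def Gn (f : ℕ → ℕ) : ℕ → Set ℂ
  | 0 => {pt 0, pt 1, pt 3, pt 5, pt 7}
  | n + 1 =>
      if f (n + 1) = 0 then ⋃ j ∈ ({0, 1, 3, 5, 7} : Set ℕ), phi j '' Gn f n
      else ⋃ j ∈ ({1, 2, 3, 4, 5, 6, 7, 8} : Set ℕ), phi j '' Gn f n

/-- The edge set `E_n(f)`: pairs of points of `G_n(f)` at Euclidean distance
`3⁻ⁿ · 2^{-1/2}`. -/
noncomputable def En (f : ℕ → ℕ) (n : ℕ) : Set (ℂ × ℂ) :=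
  {q | q.1 ∈ Gn f n ∧ q.2 ∈ Gn f n ∧
    ‖q.1 - q.2‖ = (3 : ℝ) ^ (-(n : ℤ)) / Real.sqrt 2}

/-- Energy `(1/2) Σ_{(x,y) ∈ Ed} (g x - g y)²` with simple (unit) weights. -/
noncomputable def edgeEnergy (Ed : Set (ℂ × ℂ)) (g : ℂ → ℝ) : ℝ≥0∞ :=
  (1 / 2) * ∑' e : Ed, ENNReal.ofReal ((g (e : ℂ × ℂ).1 - g (e : ℂ × ℂ).2) ^ 2)

/-- Effective resistance `R(A,B) = (inf { energy g : g ≡ 1 on A, g ≡ 0 on B })⁻¹`. -/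
noncomputable def edgeRes (Ed : Set (ℂ × ℂ)) (A B : Set ℂ) : ℝ≥0∞ :=
  (⨅ (g : ℂ → ℝ) (_ : (∀ a ∈ A, g a = 1) ∧ (∀ b ∈ B, g b = 0)), edgeEnergy Ed g)⁻¹

open Set Function

section Energy

variable {Ed : Set (ℂ × ℂ)}

lemma edgeEnergy_mono {u w : ℂ → ℝ}
    (h : ∀ e ∈ Ed, (w e.1 - w e.2) ^ 2 ≤ (u e.1 - u e.2) ^ 2) :
    edgeEnergy Ed w ≤ edgeEnergy Ed u := by
  unfold edgeEnergy
  gcongr 1 / 2 * ?_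
  exact ENNReal.tsum_le_tsum fun e => ENNReal.ofReal_le_ofReal (h e e.2)

lemma edgeEnergy_le_of_sq_le {u v w : ℂ → ℝ} {a b : ℝ} (ha : 0 ≤ a) (hb : 0 ≤ b)
    (h : ∀ e ∈ Ed, (w e.1 - w e.2) ^ 2 ≤ a * (u e.1 - u e.2) ^ 2 + b * (v e.1 - v e.2) ^ 2) :
    edgeEnergy Ed w ≤
      ENNReal.ofReal a * edgeEnergy Ed u + ENNReal.ofReal b * edgeEnergy Ed v := by
  unfold edgeEnergy
  calc _ ≤ 1 / 2 * ∑' e : Ed,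
        (ENNReal.ofReal a * ENNReal.ofReal ((u (e : ℂ × ℂ).1 - u (e : ℂ × ℂ).2) ^ 2) +
          ENNReal.ofReal b * ENNReal.ofReal ((v (e : ℂ × ℂ).1 - v (e : ℂ × ℂ).2) ^ 2)) := by
        gcongr with e
        rw [← ENNReal.ofReal_mul ha, ← ENNReal.ofReal_mul hb,
          ← ENNReal.ofReal_add (by positivity) (by positivity)]
        exact ENNReal.ofReal_le_ofReal (h e e.2)
    _ = _ := by rw [ENNReal.tsum_add, ENNReal.tsum_mul_left, ENNReal.tsum_mul_left]; ring

lemma edgeEnergy_comp_le {m : ℂ → ℂ} (hm : Injective m) (hEd : MapsTo (Prod.map m m) Ed Ed)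
    (u : ℂ → ℝ) : edgeEnergy Ed (u ∘ m) ≤ edgeEnergy Ed u := by
  unfold edgeEnergy
  gcongr 1 / 2 * ?_
  let me : Ed → Ed := fun e => ⟨Prod.map m m e, hEd e.2⟩
  have hme : Injective me := fun e e' h =>
    Subtype.ext (Prod.map_injective.2 ⟨hm, hm⟩ (congrArg Subtype.val h))
  exact ENNReal.tsum_comp_le_tsum_of_injective hme
    fun e => ENNReal.ofReal ((u (e : ℂ × ℂ).1 - u (e : ℂ × ℂ).2) ^ 2)

lemma edgeEnergy_le_of_sq_le_comp {m : ℂ → ℂ} (hm : Injective m)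
    (hEd : MapsTo (Prod.map m m) Ed Ed) {u w : ℂ → ℝ} {a b : ℝ} (ha : 0 ≤ a) (hb : 0 ≤ b)
    (h : ∀ e ∈ Ed, (w e.1 - w e.2) ^ 2 ≤
      a * (u e.1 - u e.2) ^ 2 + b * (u (m e.1) - u (m e.2)) ^ 2) :
    edgeEnergy Ed w ≤ ENNReal.ofReal (a + b) * edgeEnergy Ed u :=
  calc edgeEnergy Ed w
      ≤ ENNReal.ofReal a * edgeEnergy Ed u + ENNReal.ofReal b * edgeEnergy Ed (u ∘ m) :=
        edgeEnergy_le_of_sq_le ha hb h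
    _ ≤ ENNReal.ofReal a * edgeEnergy Ed u + ENNReal.ofReal b * edgeEnergy Ed u := by
        gcongr; exact edgeEnergy_comp_le hm hEd u
    _ = ENNReal.ofReal (a + b) * edgeEnergy Ed u := by rw [ENNReal.ofReal_add ha hb, add_mul]

def IsAdmissible (A B : Set ℂ) (g : ℂ → ℝ) : Prop :=
  (∀ a ∈ A, g a = 1) ∧ ∀ b ∈ B, g b = 0

lemma edgeRes_le_mul_edgeRes {A B A' B' : Set ℂ} {c : ℝ≥0∞} (hc₀ : c ≠ 0) (hc : c ≠ ⊤)
    (h : ∀ g, IsAdmissible A B g →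
      ∃ g', IsAdmissible A' B' g' ∧ edgeEnergy Ed g' ≤ c * edgeEnergy Ed g) :
    edgeRes Ed A B ≤ c * edgeRes Ed A' B' := by
  have key : (⨅ (g' : ℂ → ℝ) (_ : IsAdmissible A' B' g'), edgeEnergy Ed g') ≤
      c * ⨅ (g : ℂ → ℝ) (_ : IsAdmissible A B g), edgeEnergy Ed g := by
    simp only [ENNReal.mul_iInf_of_ne hc₀ hc]
    refine le_iInf₂ fun g hg => ?_
    obtain ⟨g', hg', hE⟩ := h g hg
    exact (iInf₂_le g' hg').trans hE
  unfold edgeRes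
  rw [← ENNReal.inv_le_inv, ENNReal.mul_inv (Or.inl hc₀) (Or.inl hc), inv_inv, inv_inv,
    ENNReal.inv_mul_le_iff hc₀ hc]
  exact key

end Energy

section Symmetry

lemma map_phi (m : ℂ →ₗ[ℝ] ℂ) (j : ℕ) (w : ℂ) :
    m (phi j w) = (m w - m (pt j)) / 3 + m (pt j) := by
  have hdiv : ∀ z : ℂ, z / 3 = (3 : ℝ)⁻¹ • z := fun z => by
    rw [Complex.real_smul]; push_cast; ring
  simp only [phi, hdiv, map_add, map_sub, map_smul]

lemma Gn_zero (f : ℕ → ℕ) : Gn f 0 = pt '' {0, 1, 3, 5, 7} := by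
  simp [Gn, image_insert_eq]

lemma mapsTo_biUnion_phi {m : ℂ →ₗ[ℝ] ℂ} {σ : ℕ → ℕ} (hpt : ∀ j, m (pt j) = pt (σ j))
    {S : Set ℕ} (hS : MapsTo σ S S) {G : Set ℂ} (hG : MapsTo m G G) :
    MapsTo m (⋃ j ∈ S, phi j '' G) (⋃ j ∈ S, phi j '' G) := by
  intro z hz
  obtain ⟨j, hj, w, hw, rfl⟩ := by simpa only [mem_iUnion₂, mem_image] using hz
  exact mem_iUnion₂.2 ⟨σ j, hS hj, m w, hG hw, by rw [map_phi, hpt]; rfl⟩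

lemma mapsTo_Gn (m : ℂ →ₗ[ℝ] ℂ) (σ : ℕ → ℕ) (hpt : ∀ j, m (pt j) = pt (σ j))
    (hV : MapsTo σ {0, 1, 3, 5, 7} {0, 1, 3, 5, 7})
    (hC : MapsTo σ {1, 2, 3, 4, 5, 6, 7, 8} {1, 2, 3, 4, 5, 6, 7, 8}) (f : ℕ → ℕ) :
    ∀ n, MapsTo m (Gn f n) (Gn f n)
  | 0 => by
    rw [Gn_zero]
    rintro _ ⟨j, hj, rfl⟩
    exact ⟨σ j, hV hj, (hpt j).symm⟩
  | n + 1 => by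
    have ih := mapsTo_Gn m σ hpt hV hC f n
    rw [Gn]
    split_ifs
    exacts [mapsTo_biUnion_phi hpt hV ih, mapsTo_biUnion_phi hpt hC ih]

lemma mapsTo_En (m : ℂ ≃ₗᵢ[ℝ] ℂ) (σ : ℕ → ℕ) (hpt : ∀ j, m (pt j) = pt (σ j))
    (hV : MapsTo σ {0, 1, 3, 5, 7} {0, 1, 3, 5, 7})
    (hC : MapsTo σ {1, 2, 3, 4, 5, 6, 7, 8} {1, 2, 3, 4, 5, 6, 7, 8}) (f : ℕ → ℕ) (n : ℕ) :
    MapsTo (Prod.map m m) (En f n) (En f n) := by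
  have hG := mapsTo_Gn m.toLinearEquiv.toLinearMap σ hpt hV hC f n
  rintro ⟨x, y⟩ ⟨hx, hy, hxy⟩
  exact ⟨hG hx, hG hy, by rw [Prod.map, ← map_sub, LinearIsometryEquiv.norm_map]; exact hxy⟩

def conjIdx : ℕ → ℕ
  | 1 => 7 | 2 => 6 | 3 => 5 | 5 => 3 | 6 => 2 | 7 => 1 | j => j

lemma conj_pt (j : ℕ) : starRingEnd ℂ (pt j) = pt (conjIdx j) := by
  rcases j with _ | _ | _ | _ | _ | _ | _ | _ | _ | j <;>
    first | exact map_zero _ | norm_num [pt, conjIdx, Complex.ext_iff, map_ofNat]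

lemma mapsTo_En_conj (f : ℕ → ℕ) (n : ℕ) :
    MapsTo (Prod.map (starRingEnd ℂ) (starRingEnd ℂ)) (En f n) (En f n) :=
  mapsTo_En Complex.conjLIE conjIdx conj_pt
    (by rintro j (rfl | rfl | rfl | rfl | rfl) <;> simp [conjIdx])
    (by rintro j (rfl | rfl | rfl | rfl | rfl | rfl | rfl | rfl) <;> simp [conjIdx]) f n

noncomputable def negConj : ℂ ≃ₗᵢ[ℝ] ℂ := Complex.conjLIE.trans (LinearIsometryEquiv.neg ℝ)

lemma negConj_apply (z : ℂ) : negConj z = -starRingEnd ℂ z := rfl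

lemma negConj_eq_self {z : ℂ} (hz : z.re = 0) : negConj z = z := by
  simp [negConj_apply, Complex.ext_iff, hz]

def negConjIdx : ℕ → ℕ
  | 1 => 3 | 3 => 1 | 4 => 8 | 8 => 4 | 5 => 7 | 7 => 5 | j => j

lemma negConj_pt (j : ℕ) : negConj (pt j) = pt (negConjIdx j) := by
  rcases j with _ | _ | _ | _ | _ | _ | _ | _ | _ | j <;>
    first | exact map_zero _ | norm_num [negConj_apply, pt, negConjIdx, Complex.ext_iff, map_ofNat]

lemma mapsTo_En_negConj (f : ℕ → ℕ) (n : ℕ) :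
    MapsTo (Prod.map negConj negConj) (En f n) (En f n) :=
  mapsTo_En negConj negConjIdx negConj_pt
    (by rintro j (rfl | rfl | rfl | rfl | rfl) <;> simp [negConjIdx])
    (by rintro j (rfl | rfl | rfl | rfl | rfl | rfl | rfl | rfl) <;> simp [negConjIdx]) f n

end Symmetry

section VerticalAxis

lemma exists_int_pt_re (j : ℕ) : ∃ k : ℤ, (pt j).re * 2 = k := by
  rcases j with _ | _ | _ | _ | _ | _ | _ | _ | _ | j
  exacts [⟨0, by norm_num [pt]⟩, ⟨-1, by norm_num [pt]⟩, ⟨0, by norm_num [pt]⟩,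
    ⟨1, by norm_num [pt]⟩, ⟨1, by norm_num [pt]⟩, ⟨1, by norm_num [pt]⟩, ⟨0, by norm_num [pt]⟩,
    ⟨-1, by norm_num [pt]⟩, ⟨-1, by norm_num [pt]⟩, ⟨0, by simp [pt]⟩]

lemma phi_re (j : ℕ) (w : ℂ) : (phi j w).re = w.re / 3 + 2 / 3 * (pt j).re := by
  simp [phi, Complex.div_ofNat_re]; ring

lemma exists_int_re_of_mem_Gn (f : ℕ → ℕ) :
    ∀ n, ∀ z ∈ Gn f n, ∃ k : ℤ, z.re * (2 * 3 ^ n) = k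
  | 0, z, hz => by
    rw [Gn_zero] at hz
    obtain ⟨j, -, rfl⟩ := hz
    simpa [mul_comm] using exists_int_pt_re j
  | n + 1, z, hz => by
    obtain ⟨j, w, hw, rfl⟩ : ∃ j, ∃ w ∈ Gn f n, phi j w = z := by
      rw [Gn] at hz
      split_ifs at hz <;>
      · obtain ⟨j, -, hj⟩ := mem_iUnion₂.1 hz
        exact ⟨j, hj⟩
    obtain ⟨k, hk⟩ := exists_int_re_of_mem_Gn f n w hw
    obtain ⟨l, hl⟩ := exists_int_pt_re j
    refine ⟨k + l * 2 * 3 ^ n, ?_⟩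
    rw [phi_re]
    push_cast
    linear_combination hk + 2 * 3 ^ n * hl

lemma not_re_neg_pos_of_mem_En {f : ℕ → ℕ} {n : ℕ} {x y : ℂ} (h : (x, y) ∈ En f n) :
    ¬ (x.re < 0 ∧ 0 < y.re) := by
  rintro ⟨hx, hy⟩
  obtain ⟨hxG, hyG, hxy⟩ := h
  obtain ⟨k, hk⟩ := exists_int_re_of_mem_Gn f n x hxG
  obtain ⟨l, hl⟩ := exists_int_re_of_mem_Gn f n y hyG
  have hN : (0 : ℝ) < 2 * 3 ^ n := by positivity
  have hk : k ≤ -1 := by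
    have : (k : ℝ) < 0 := hk ▸ mul_neg_of_neg_of_pos hx hN
    have : k < 0 := by exact_mod_cast this
    omega
  have hl : 1 ≤ l := by
    have : (0 : ℝ) < l := hl ▸ mul_pos hy hN
    exact_mod_cast this
  have hgap : ((3 : ℝ) ^ n)⁻¹ ≤ y.re - x.re := by
    rw [inv_le_iff_one_le_mul₀ (by positivity)]
    have : (2 : ℝ) ≤ l - k := by exact_mod_cast (by omega : 2 ≤ l - k)
    linarith
  have hshort : y.re - x.re < ((3 : ℝ) ^ n)⁻¹ :=
    calc y.re - x.re ≤ ‖x - y‖ := by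
          rw [← Complex.sub_re, ← norm_sub_rev]; exact Complex.re_le_norm _
      _ = ((3 : ℝ) ^ n)⁻¹ / √2 := by rw [hxy, zpow_neg, zpow_natCast]
      _ < ((3 : ℝ) ^ n)⁻¹ := div_lt_self (by positivity) Real.one_lt_sqrt_two
  linarith

lemma re_nonpos_or_nonneg_of_mem_En {f : ℕ → ℕ} {n : ℕ} {x y : ℂ} (h : (x, y) ∈ En f n) :
    (x.re ≤ 0 ∧ y.re ≤ 0) ∨ (0 ≤ x.re ∧ 0 ≤ y.re) := by
  have h' : (y, x) ∈ En f n := ⟨h.2.1, h.1, by rw [norm_sub_rev]; exact h.2.2⟩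
  have := not_re_neg_pos_of_mem_En h
  have := not_re_neg_pos_of_mem_En h'
  grind

end VerticalAxis

section Potentials

variable (f : ℕ → ℕ) (n : ℕ)

noncomputable def antisymmetrize (g : ℂ → ℝ) (z : ℂ) : ℝ := (g z + 1 - g (negConj z)) / 2

noncomputable def foldAt (c : ℝ) (g : ℂ → ℝ) (z : ℂ) : ℝ :=
  if z.re < 0 then max (g z) c else min (g z) c

noncomputable def clipConjSum (c : ℝ) (g : ℂ → ℝ) (z : ℂ) : ℝ :=
  max (min (g z + g (starRingEnd ℂ z) - c) 1) 0

lemma antisymmetrize_of_re_eq_zero (g : ℂ → ℝ) {z : ℂ} (hz : z.re = 0) :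
    antisymmetrize g z = 1 / 2 := by
  rw [antisymmetrize, negConj_eq_self hz]; ring

lemma foldAt_of_re_nonpos {c : ℝ} {g : ℂ → ℝ} (hax : ∀ z : ℂ, z.re = 0 → g z = c) {z : ℂ}
    (hz : z.re ≤ 0) : foldAt c g z = max (g z) c := by
  rcases hz.lt_or_eq with hz | hz
  · rw [foldAt, if_pos hz]
  · rw [foldAt, if_neg (not_lt.2 hz.ge), hax z hz, min_self, max_self]

lemma foldAt_of_re_nonneg {c : ℝ} {g : ℂ → ℝ} {z : ℂ} (hz : 0 ≤ z.re) :
    foldAt c g z = min (g z) c := by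
  rw [foldAt, if_neg (not_lt.2 hz)]

lemma sq_foldAt_sub_le {c : ℝ} {g : ℂ → ℝ} (hax : ∀ z : ℂ, z.re = 0 → g z = c) {x y : ℂ}
    (hxy : (x.re ≤ 0 ∧ y.re ≤ 0) ∨ (0 ≤ x.re ∧ 0 ≤ y.re)) :
    (foldAt c g x - foldAt c g y) ^ 2 ≤ (g x - g y) ^ 2 := by
  rw [sq_le_sq]
  rcases hxy with ⟨hx, hy⟩ | ⟨hx, hy⟩
  · rw [foldAt_of_re_nonpos hax hx, foldAt_of_re_nonpos hax hy]
    exact abs_max_sub_max_le_abs _ _ _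
  · rw [foldAt_of_re_nonneg hx, foldAt_of_re_nonneg hy]
    simpa using abs_min_sub_min_le_max (g x) c (g y) c

lemma abs_clip_sub_clip_le (s t : ℝ) : |max (min s 1) 0 - max (min t 1) 0| ≤ |s - t| :=
  (abs_max_sub_max_le_abs _ _ _).trans (by simpa using abs_min_sub_min_le_max s 1 t 1)

lemma edgeEnergy_antisymmetrize_le (g : ℂ → ℝ) :
    edgeEnergy (En f n) (antisymmetrize g) ≤ edgeEnergy (En f n) g := by
  have h := edgeEnergy_le_of_sq_le_comp negConj.injective (mapsTo_En_negConj f n)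
    (u := g) (w := antisymmetrize g) (a := 1 / 2) (b := 1 / 2) (by norm_num) (by norm_num)
    fun e _ => by
      simp only [antisymmetrize]
      nlinarith [sq_nonneg (g e.1 - g e.2 + (g (negConj e.1) - g (negConj e.2)))]
  norm_num at h
  exact h

lemma edgeEnergy_foldAt_le {c : ℝ} {g : ℂ → ℝ} (hax : ∀ z : ℂ, z.re = 0 → g z = c) :
    edgeEnergy (En f n) (foldAt c g) ≤ edgeEnergy (En f n) g :=
  edgeEnergy_mono fun _ he => sq_foldAt_sub_le hax (re_nonpos_or_nonneg_of_mem_En he)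

lemma edgeEnergy_clipConjSum_le (c : ℝ) (g : ℂ → ℝ) :
    edgeEnergy (En f n) (clipConjSum c g) ≤ 4 * edgeEnergy (En f n) g := by
  have h := edgeEnergy_le_of_sq_le_comp (starRingEnd ℂ).injective (mapsTo_En_conj f n)
    (u := g) (w := clipConjSum c g) (a := 2) (b := 2) (by norm_num) (by norm_num)
    fun e _ => by
      have hclip := sq_le_sq.2 (abs_clip_sub_clip_le (g e.1 + g (starRingEnd ℂ e.1) - c)
        (g e.2 + g (starRingEnd ℂ e.2) - c))
      simp only [clipConjSum]
      nlinarith [sq_nonneg (g e.1 - g e.2 - (g (starRingEnd ℂ e.1) - g (starRingEnd ℂ e.2)))]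
  norm_num at h
  exact h

lemma exists_potential_pt5_le_pt7 {g : ℂ → ℝ} (h1 : g (pt 1) = 1) (h3 : g (pt 3) = 0) :
    ∃ g' : ℂ → ℝ, g' (pt 1) = 1 ∧ g' (pt 3) = 0 ∧ g' (pt 5) ≤ g' (pt 7) ∧
      edgeEnergy (En f n) g' ≤ edgeEnergy (En f n) g := by
  have hax (z : ℂ) (hz : z.re = 0) := antisymmetrize_of_re_eq_zero g hz
  refine ⟨foldAt (1 / 2) (antisymmetrize g), ?_, ?_, ?_,
    (edgeEnergy_foldAt_le f n hax).trans (edgeEnergy_antisymmetrize_le f n g)⟩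
  · rw [foldAt_of_re_nonpos hax (by norm_num [pt])]
    norm_num [antisymmetrize, negConj_pt, negConjIdx, h1, h3]
  · rw [foldAt_of_re_nonneg (by norm_num [pt])]
    norm_num [antisymmetrize, negConj_pt, negConjIdx, h1, h3]
  · rw [foldAt_of_re_nonneg (by norm_num [pt]), foldAt_of_re_nonpos hax (by norm_num [pt])]
    exact (min_le_right _ _).trans (le_max_right _ _)

lemma isAdmissible_clipConjSum {g : ℂ → ℝ} (h1 : g (pt 1) = 1) (h3 : g (pt 3) = 0)
    (h57 : g (pt 5) ≤ g (pt 7)) :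
    IsAdmissible {pt 1, pt 7} {pt 3, pt 5} (clipConjSum (g (pt 5)) g) := by
  refine ⟨?_, ?_⟩ <;> simp only [mem_insert_iff, mem_singleton_iff, forall_eq_or_imp, forall_eq,
    clipConjSum, conj_pt, conjIdx, h1, h3]
  · constructor <;> rw [min_eq_right (by linarith)] <;> norm_num
  · norm_num

end Potentials

theorem stmt_11_general (f : ℕ → ℕ) (n : ℕ) :
    edgeRes (En f n) {pt 1} {pt 3} ≤ 4 * edgeRes (En f n) {pt 1, pt 7} {pt 3, pt 5} := by
  refine edgeRes_le_mul_edgeRes (by norm_num) (by norm_num) fun g hg => ?_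
  obtain ⟨g', h1, h3, h57, hE⟩ :=
    exists_potential_pt5_le_pt7 f n (hg.1 _ rfl) (hg.2 _ rfl)
  exact ⟨_, isAdmissible_clipConjSum h1 h3 h57,
    (edgeEnergy_clipConjSum_le f n _ g').trans (by gcongr)⟩

/-- In the graphs `(G_n(f), E_n(f))` with simple weights, for every
`n ≥ 0` and every `f : ℕ → {0,1}`,
`R(p₁, p₃) ≤ 4 · R({p₁, p₇}, {p₃, p₅})`. -/
theorem stmt_11 (f : ℕ → ℕ) (hf : ∀ n, f n = 0 ∨ f n = 1) (n : ℕ) :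
    edgeRes (En f n) {pt 1} {pt 3} ≤ 4 * edgeRes (En f n) {pt 1, pt 7} {pt 3, pt 5} :=
  stmt_11_general f n
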